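/- The equilibrium of the two-level model is a global attractor: if t ↦ (η₁(t), η₂(t)) is a differentiable pair of 2×2 complex matrix-valued functions on [0,∞) satisfying η₁'(t) = 𝒦₁(η₁(t),η₂(t)) and η₂'(t) = 𝒦₂(η₁(t),η₂(t)) for all t ≥ 0, with η₁(0), η₂(0) positive semidefinite and Tr(η₁(0)) + Tr(η₂(0)) = 1, then η₁(t) → p(z₁⁺P₊ + z₁⁻P₋) and η₂(t) → (1−p)(z₂⁺P₊ + z₂⁻P₋) as t → ∞. -/

import Mathlib

open Matrix
open scoped ComplexOrder

attribute [local instance] Matrix.normedAddCommGroup Matrix.normedSpace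

noncomputable section TwoLevel

def σm : Matrix (Fin 2) (Fin 2) ℂ := !![0, 0; 1, 0]
def σp : Matrix (Fin 2) (Fin 2) ℂ := !![0, 1; 0, 0]
def σz : Matrix (Fin 2) (Fin 2) ℂ := !![1, 0; 0, -1]
def Pp : Matrix (Fin 2) (Fin 2) ℂ := !![1, 0; 0, 0]
def Pm : Matrix (Fin 2) (Fin 2) ℂ := !![0, 0; 0, 1]

/-- `𝒦₁` of the two-level model. -/
def K1 (γ₀ γ₁ γ₂ κ ω₁ : ℝ) (η₁ η₂ : Matrix (Fin 2) (Fin 2) ℂ) :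
    Matrix (Fin 2) (Fin 2) ℂ :=
  (γ₀ : ℂ) • (σm * η₁ * σp - (1/2 : ℂ) • (Pp * η₁ + η₁ * Pp))
    + (γ₂ : ℂ) • (σp * η₂ * σm)
    - ((γ₁ : ℂ)/2) • (Pp * η₁ + η₁ * Pp)
    - ((γ₀ : ℂ) * (κ : ℂ)) • η₁
    - (Complex.I * (ω₁ : ℂ) / 2) • (σz * η₁ - η₁ * σz)

/-- `𝒦₂` of the two-level model. -/
def K2 (γ₀ γ₁ γ₂ κ ω₂ : ℝ) (η₁ η₂ : Matrix (Fin 2) (Fin 2) ℂ) :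
    Matrix (Fin 2) (Fin 2) ℂ :=
  (γ₀ : ℂ) • (σm * η₂ * σp - (1/2 : ℂ) • (Pp * η₂ + η₂ * Pp))
    + (γ₁ : ℂ) • (σm * η₁ * σp)
    - ((γ₂ : ℂ)/2) • (Pm * η₂ + η₂ * Pm)
    + ((γ₀ : ℂ) * (κ : ℂ)) • η₁
    - (Complex.I * (ω₂ : ℂ) / 2) • (σz * η₂ - η₂ * σz)

/-- `κ₂ = γ₂κ/(γ₁+γ₀(1+κ))`. -/
def κ₂ (γ₀ γ₁ γ₂ κ : ℝ) : ℝ := γ₂ * κ / (γ₁ + γ₀ * (1 + κ))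

/-- `z₁⁺ = κ₁/(1+κ₁)` with `κ₁ = κ`. -/
def z1p (κ : ℝ) : ℝ := κ / (1 + κ)

/-- `z₂⁺ = κ₂/(1+κ₂)`. -/
def z2p (γ₀ γ₁ γ₂ κ : ℝ) : ℝ := κ₂ γ₀ γ₁ γ₂ κ / (1 + κ₂ γ₀ γ₁ γ₂ κ)

/-- `p = γ₂(1+κ)/(γ₂ + κ(γ₀+γ₁+γ₂) + κ²(γ₀+γ₂))`. -/
def peq (γ₀ γ₁ γ₂ κ : ℝ) : ℝ :=
  γ₂ * (1 + κ) / (γ₂ + κ * (γ₀ + γ₁ + γ₂) + κ ^ 2 * (γ₀ + γ₂))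

/-- `η₁(∞) = p(z₁⁺P₊ + z₁⁻P₋)`. -/
def η1eq (γ₀ γ₁ γ₂ κ : ℝ) : Matrix (Fin 2) (Fin 2) ℂ :=
  (peq γ₀ γ₁ γ₂ κ : ℂ) • ((z1p κ : ℂ) • Pp + ((1 - z1p κ : ℝ) : ℂ) • Pm)

/-- `η₂(∞) = (1−p)(z₂⁺P₊ + z₂⁻P₋)`. -/
def η2eq (γ₀ γ₁ γ₂ κ : ℝ) : Matrix (Fin 2) (Fin 2) ℂ :=
  ((1 - peq γ₀ γ₁ γ₂ κ : ℝ) : ℂ) •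
    ((z2p γ₀ γ₁ γ₂ κ : ℂ) • Pp + ((1 - z2p γ₀ γ₁ γ₂ κ : ℝ) : ℂ) • Pm)

end TwoLevel

/-!
Subtracting the equilibrium, which `K1` and `K2` annihilate, leaves the homogeneous linear
system with zero total trace. The coherences obey damped scalar equations, the second one driven
by the first. Trace conservation reduces the four populations to three, governed by a `3 × 3`
matrix whose characteristic polynomial satisfies the Routh–Hurwitz conditions, so all its
eigenvalues have negative real part. A linear system with such a matrix decays: factor the
characteristic polynomial over `ℂ` and, by Cayley–Hamilton, peel off one root at a time, each
step being a scalar equation `f' = z f + g` with `Re z < 0` and `g → 0`.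
-/

open Filter Topology Polynomial Set

section LinearDecay

variable {c : ℂ} {f g : ℝ → ℂ}

lemma two_mul_le_neg_mul_sq_add_sq_div {x a b : ℝ} (hx : x < 0) :
    2 * a * b ≤ -x * a ^ 2 + b ^ 2 / -x := by
  have hx0 : x ≠ 0 := hx.ne
  rw [← sub_nonneg]
  have key : -x * a ^ 2 + b ^ 2 / -x - 2 * a * b = (x * a + b) ^ 2 / -x := by
    field_simp
    ring
  rw [key]
  have hx' := neg_pos.2 hx
  positivity

/-- `‖f‖²` has derivative `2 Re c ‖f‖² + 2⟪f, g⟫ ≤ Re c ‖f‖² + δ² / |Re c|`; apply Grönwall. -/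
lemma sq_norm_le_of_hasDerivAt_linear (hc : c.re < 0) {T δ : ℝ}
    (hf : ∀ t ≥ T, HasDerivAt f (c * f t + g t) t) (hg : ∀ t ≥ T, ‖g t‖ ≤ δ) {t : ℝ}
    (ht : T ≤ t) :
    ‖f t‖ ^ 2 ≤ ‖f T‖ ^ 2 * Real.exp (c.re * (t - T)) + δ ^ 2 / c.re ^ 2 := by
  have hderiv : ∀ s ≥ T, HasDerivAt (‖f ·‖ ^ 2) (2 * inner ℝ (f s) (c * f s + g s)) s :=
    fun s hs => (hf s hs).norm_sq
  have hbound : ∀ s ≥ T,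
      2 * inner ℝ (f s) (c * f s + g s) ≤ c.re * ‖f s‖ ^ 2 + δ ^ 2 / -c.re := by
    intro s hs
    have hinner : inner ℝ (f s) (c * f s) = c.re * ‖f s‖ ^ 2 := by
      rw [Complex.inner, mul_assoc, Complex.mul_conj, Complex.re_mul_ofReal,
        Complex.normSq_eq_norm_sq]
    have hg' : inner ℝ (f s) (g s) ≤ ‖f s‖ * δ :=
      (real_inner_le_norm _ _).trans (mul_le_mul_of_nonneg_left (hg s hs) (norm_nonneg _))
    rw [inner_add_right, hinner]
    have hδ := (norm_nonneg (g s)).trans (hg s hs)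
    nlinarith [two_mul_le_neg_mul_sq_add_sq_div (a := ‖f s‖) (b := δ) hc]
  have hgronwall :=
    le_gronwallBound_of_liminf_deriv_right_le (f := (‖f ·‖ ^ 2)) (a := T) (b := t)
    (fun s hs => (hderiv s hs.1).continuousAt.continuousWithinAt)
    (fun s hs _ hr => (hderiv s hs.1).hasDerivWithinAt.liminf_right_slope_le hr) le_rfl
    (fun s hs => hbound s hs.1) t ⟨ht, le_rfl⟩
  refine hgronwall.trans ?_
  rw [gronwallBound_of_K_ne_0 hc.ne]
  have hcoef : δ ^ 2 / -c.re / c.re = -(δ ^ 2 / c.re ^ 2) := by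
    field_simp
  dsimp only
  rw [hcoef]
  have hcoef_nonneg : 0 ≤ δ ^ 2 / c.re ^ 2 := by positivity
  nlinarith [mul_nonneg hcoef_nonneg (Real.exp_pos (c.re * (t - T))).le]

theorem Complex.tendsto_zero_of_hasDerivAt_linear (hc : c.re < 0)
    (hf : ∀ᶠ t in atTop, HasDerivAt f (c * f t + g t) t) (hg : Tendsto g atTop (𝓝 0)) :
    Tendsto f atTop (𝓝 0) := by
  rw [NormedAddGroup.tendsto_nhds_zero]
  intro ε hε
  set δ := ε * -c.re / 2
  have hδ : δ ^ 2 / c.re ^ 2 = ε ^ 2 / 4 := by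
    have hc0 := hc.ne
    simp only [δ]
    field_simp
    ring
  obtain ⟨T, hT⟩ := eventually_atTop.1
    (hf.and ((NormedAddGroup.tendsto_nhds_zero.1 hg) δ (by simp [δ]; nlinarith)))
  have hexp : Tendsto (fun t => ‖f T‖ ^ 2 * Real.exp (c.re * (t - T))) atTop (𝓝 0) := by
    have hlin : Tendsto (fun t => c.re * (t - T)) atTop atBot := by
      simpa [sub_eq_add_neg] using
        (tendsto_atTop_add_const_right _ (-T) tendsto_id).const_mul_atTop_of_neg hc
    simpa using (Real.tendsto_exp_atBot.comp hlin).const_mul (‖f T‖ ^ 2)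
  filter_upwards [eventually_ge_atTop T,
    hexp.eventually (gt_mem_nhds (by positivity : 0 < ε ^ 2 / 2))] with t ht hsmall
  have hbound := sq_norm_le_of_hasDerivAt_linear hc (fun s hs => (hT s hs).1)
    (fun s hs => (hT s hs).2.le) ht
  have hsq : ‖f t‖ ^ 2 < ε ^ 2 := by nlinarith
  exact lt_of_pow_lt_pow_left₀ 2 hε.le hsq

lemma Complex.tendsto_zero_of_hasDerivAt_cascade {c₁ c₂ d : ℂ} (hc₁ : c₁.re < 0)
    (hc₂ : c₂.re < 0) {f₁ f₂ : ℝ → ℂ} (hf₁ : ∀ᶠ t in atTop, HasDerivAt f₁ (c₁ * f₁ t) t)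
    (hf₂ : ∀ᶠ t in atTop, HasDerivAt f₂ (c₂ * f₂ t + d * f₁ t) t) :
    Tendsto f₁ atTop (𝓝 0) ∧ Tendsto f₂ atTop (𝓝 0) := by
  have h₁ : Tendsto f₁ atTop (𝓝 0) :=
    tendsto_zero_of_hasDerivAt_linear (g := 0) hc₁ (by simpa using hf₁) tendsto_const_nhds
  exact ⟨h₁, tendsto_zero_of_hasDerivAt_linear hc₂ hf₂ (by simpa using h₁.const_mul d)⟩

end LinearDecay

section LinearSystem

lemma HasDerivAt.mulVec_left {m n : Type*} [Fintype n] (B : Matrix m n ℂ) {v : ℝ → n → ℂ}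
    {v' : n → ℂ} {t : ℝ} (hv : HasDerivAt v v' t) : HasDerivAt (fun s => B *ᵥ v s) (B *ᵥ v') t := by
  rw [hasDerivAt_pi] at hv ⊢
  intro i
  simp only [mulVec, dotProduct]
  exact HasDerivAt.fun_sum fun j _ => (hv j).const_mul (B i j)

variable {n : Type*} [Fintype n] [DecidableEq n]

lemma Matrix.aeval_X_sub_C_mulVec (A : Matrix n n ℂ) (z : ℂ) (w : n → ℂ) :
    aeval A (X - C z) *ᵥ w = A *ᵥ w - z • w := by
  rw [map_sub, aeval_X, aeval_C, sub_mulVec, Algebra.algebraMap_eq_smul_one, smul_mulVec,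
    one_mulVec]

/-- If `∏ (A - z)` kills `v`, then `u = (A - z₀) v` solves the same system and is killed by the
shorter product, while `v' = z₀ v + u`; so `v → 0` follows from `u → 0` by the scalar case. -/
lemma Matrix.tendsto_zero_of_hasDerivAt_mulVec_of_aeval_mulVec_eq_zero {A : Matrix n n ℂ}
    (s : Multiset ℂ) (hs : ∀ z ∈ s, z.re < 0) {v : ℝ → n → ℂ}
    (hv : ∀ᶠ t in atTop, HasDerivAt v (A *ᵥ v t) t)
    (hker : ∀ᶠ t in atTop, aeval A (s.map (X - C ·)).prod *ᵥ v t = 0) :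
    Tendsto v atTop (𝓝 0) := by
  induction s using Multiset.induction_on generalizing v with
  | empty =>
    refine tendsto_const_nhds.congr' ?_
    filter_upwards [hker] with t ht
    simpa using ht.symm
  | cons z s ih =>
    set u : ℝ → n → ℂ := fun t => A *ᵥ v t - z • v t
    have hu : ∀ᶠ t in atTop, HasDerivAt u (A *ᵥ u t) t := by
      filter_upwards [hv] with t ht
      refine ((ht.mulVec_left A).sub (ht.const_smul z)).congr_deriv ?_
      rw [mulVec_sub, mulVec_smul]
    have hu0 : Tendsto u atTop (𝓝 0) := by
      refine ih (fun z hz => hs z (Multiset.mem_cons_of_mem hz)) hu ?_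
      filter_upwards [hker] with t ht
      rwa [Multiset.map_cons, Multiset.prod_cons, mul_comm, map_mul, ← mulVec_mulVec,
        Matrix.aeval_X_sub_C_mulVec] at ht
    refine tendsto_pi_nhds.2 fun i => ?_
    refine Complex.tendsto_zero_of_hasDerivAt_linear (hs z (Multiset.mem_cons_self z s)) ?_
      (tendsto_pi_nhds.1 hu0 i)
    filter_upwards [hv] with t ht
    refine (hasDerivAt_pi.1 ht i).congr_deriv ?_
    simp [u]

theorem Matrix.tendsto_zero_of_hasDerivAt_mulVec {A : Matrix n n ℂ}
    (hA : ∀ z ∈ A.charpoly.roots, z.re < 0) {v : ℝ → n → ℂ}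
    (hv : ∀ᶠ t in atTop, HasDerivAt v (A *ᵥ v t) t) : Tendsto v atTop (𝓝 0) := by
  refine tendsto_zero_of_hasDerivAt_mulVec_of_aeval_mulVec_eq_zero _ hA hv (.of_forall ?_)
  intro t
  rw [prod_multiset_X_sub_C_of_monic_of_roots_card_eq A.charpoly_monic
    IsAlgClosed.card_roots_eq_natDegree, aeval_self_charpoly, zero_mulVec]

end LinearSystem

/-- Routh–Hurwitz for cubics. A real root `x ≥ 0` makes every term nonnegative and `c` positive;
for a non-real root `x + iy`, the imaginary part gives `y² = 3x² + 2ax + b`, and substituting into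
the real part leaves `8x³ + 8ax² + 2(a² + b)x = c - ab < 0`. -/
theorem Complex.re_neg_of_cubic_eq_zero {a b c : ℝ} (ha : 0 < a) (hb : 0 < b) (hc : 0 < c)
    (habc : c < a * b) {z : ℂ} (hz : z ^ 3 + a * z ^ 2 + b * z + c = 0) : z.re < 0 := by
  obtain ⟨x, y⟩ := z
  have hre : x ^ 3 - 3 * x * y ^ 2 + a * (x ^ 2 - y ^ 2) + b * x + c = 0 := by
    have := congrArg Complex.re hz
    simp [pow_succ] at this
    linear_combination this
  have him : y * (3 * x ^ 2 - y ^ 2 + 2 * a * x + b) = 0 := by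
    have := congrArg Complex.im hz
    simp [pow_succ] at this
    linear_combination this
  show x < 0
  by_contra! hx
  rcases mul_eq_zero.1 him with rfl | hy
  · nlinarith [pow_nonneg hx 3, mul_nonneg ha.le (sq_nonneg x)]
  · have key : 8 * x ^ 3 + 8 * a * x ^ 2 + 2 * (a ^ 2 + b) * x = c - a * b := by
      linear_combination -hre + (3 * x + a) * hy
    nlinarith [pow_nonneg hx 3, mul_nonneg ha.le (sq_nonneg x), mul_nonneg hx (sq_nonneg a),
      mul_nonneg hx hb.le]

lemma HasDerivAt.matrix_apply {m n : Type*} [Fintype n] {f : ℝ → Matrix m n ℂ}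
    {f' : Matrix m n ℂ} {t : ℝ} (h : HasDerivAt f f' t) (i : m) (j : n) :
    HasDerivAt (fun s => f s i j) (f' i j) t :=
  hasDerivAt_pi.1 (hasDerivAt_pi.1 h i) j

lemma HasDerivAt.matrix_trace {n : Type*} [Fintype n] {f : ℝ → Matrix n n ℂ}
    {f' : Matrix n n ℂ} {t : ℝ} (h : HasDerivAt f f' t) :
    HasDerivAt (fun s => (f s).trace) f'.trace t :=
  HasDerivAt.fun_sum fun i _ => h.matrix_apply i i

lemma Matrix.tendsto_of_fin_two {α : Type*} {l : Filter α} {f : α → Matrix (Fin 2) (Fin 2) ℂ}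
    {A : Matrix (Fin 2) (Fin 2) ℂ} (h₀₀ : Tendsto (fun x => f x 0 0) l (𝓝 (A 0 0)))
    (h₀₁ : Tendsto (fun x => f x 0 1) l (𝓝 (A 0 1)))
    (h₁₀ : Tendsto (fun x => f x 1 0) l (𝓝 (A 1 0)))
    (h₁₁ : Tendsto (fun x => f x 1 1) l (𝓝 (A 1 1))) : Tendsto f l (𝓝 A) :=
  tendsto_pi_nhds.2 fun i => tendsto_pi_nhds.2 fun j => by
    fin_cases i <;> fin_cases j <;> assumption

section TwoLevelModel

lemma K1_eq (γ₀ γ₁ γ₂ κ ω₁ : ℝ) (M N : Matrix (Fin 2) (Fin 2) ℂ) :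
    K1 γ₀ γ₁ γ₂ κ ω₁ M N =
      !![-(γ₀ * (1 + κ) + γ₁) * M 0 0 + γ₂ * N 1 1,
          (-((γ₀ + γ₁) / 2 + γ₀ * κ) - Complex.I * ω₁) * M 0 1;
        (-((γ₀ + γ₁) / 2 + γ₀ * κ) + Complex.I * ω₁) * M 1 0,
          γ₀ * M 0 0 - γ₀ * κ * M 1 1] := by
  ext i j
  fin_cases i <;> fin_cases j <;>
    simp [K1, σm, σp, σz, Pp, mul_apply, vecMul, dotProduct, Fin.sum_univ_two] <;> ring

lemma K2_eq (γ₀ γ₁ γ₂ κ ω₂ : ℝ) (M N : Matrix (Fin 2) (Fin 2) ℂ) :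
    K2 γ₀ γ₁ γ₂ κ ω₂ M N =
      !![γ₀ * κ * M 0 0 - γ₀ * N 0 0,
          (-((γ₀ + γ₂) / 2) - Complex.I * ω₂) * N 0 1 + γ₀ * κ * M 0 1;
        (-((γ₀ + γ₂) / 2) + Complex.I * ω₂) * N 1 0 + γ₀ * κ * M 1 0,
          γ₀ * N 0 0 + γ₁ * M 0 0 + γ₀ * κ * M 1 1 - γ₂ * N 1 1] := by
  ext i j
  fin_cases i <;> fin_cases j <;>
    simp [K2, σm, σp, σz, Pp, Pm, mul_apply, vecMul, dotProduct, Fin.sum_univ_two] <;> ring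

lemma K1_sub (γ₀ γ₁ γ₂ κ ω₁ : ℝ) (M M' N N' : Matrix (Fin 2) (Fin 2) ℂ) :
    K1 γ₀ γ₁ γ₂ κ ω₁ (M - M') (N - N') = K1 γ₀ γ₁ γ₂ κ ω₁ M N - K1 γ₀ γ₁ γ₂ κ ω₁ M' N' := by
  simp only [K1_eq]
  ext i j
  fin_cases i <;> fin_cases j <;> simp <;> ring

lemma K2_sub (γ₀ γ₁ γ₂ κ ω₂ : ℝ) (M M' N N' : Matrix (Fin 2) (Fin 2) ℂ) :
    K2 γ₀ γ₁ γ₂ κ ω₂ (M - M') (N - N') = K2 γ₀ γ₁ γ₂ κ ω₂ M N - K2 γ₀ γ₁ γ₂ κ ω₂ M' N' := by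
  simp only [K2_eq]
  ext i j
  fin_cases i <;> fin_cases j <;> simp <;> ring

lemma trace_η1eq_add_trace_η2eq (γ₀ γ₁ γ₂ κ : ℝ) :
    (η1eq γ₀ γ₁ γ₂ κ).trace + (η2eq γ₀ γ₁ γ₂ κ).trace = 1 := by
  simp [η1eq, η2eq, Pp, Pm, trace_fin_two]
  ring

/-- The populations `(η₁₀₀, η₁₁₁, η₂₀₀)` evolve by this matrix once `η₂₁₁` is eliminated through
the conserved total trace. -/
def populationMatrix (γ₀ γ₁ γ₂ κ : ℝ) : Matrix (Fin 3) (Fin 3) ℂ :=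
  !![-(γ₀ * (1 + κ) + γ₁ + γ₂), -γ₂, -γ₂;
    γ₀, -(γ₀ * κ), 0;
    γ₀ * κ, 0, -γ₀]

lemma eval_charpoly_populationMatrix (γ₀ γ₁ γ₂ κ : ℝ) (z : ℂ) :
    (populationMatrix γ₀ γ₁ γ₂ κ).charpoly.eval z =
      z ^ 3 + ((2 * γ₀ * (1 + κ) + γ₁ + γ₂ : ℝ) : ℂ) * z ^ 2
        + ((2 * γ₀ * γ₂ * (1 + κ) + γ₀ * γ₁ * (1 + κ) + γ₀ ^ 2 * (1 + 3 * κ + κ ^ 2) : ℝ) : ℂ) * z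
        + ((γ₀ ^ 2 * γ₂ * (1 + κ + κ ^ 2) + γ₀ ^ 2 * γ₁ * κ + γ₀ ^ 3 * κ * (1 + κ) : ℝ) : ℂ) := by
  rw [eval_charpoly, det_fin_three]
  simp [populationMatrix]
  ring

variable {γ₀ γ₁ γ₂ κ : ℝ}

lemma K1_η1eq_η2eq (hγ₀ : 0 < γ₀) (hγ₁ : 0 ≤ γ₁) (hγ₂ : 0 < γ₂) (hκ : 0 ≤ κ) (ω₁ : ℝ) :
    K1 γ₀ γ₁ γ₂ κ ω₁ (η1eq γ₀ γ₁ γ₂ κ) (η2eq γ₀ γ₁ γ₂ κ) = 0 := by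
  rw [K1_eq]
  ext i j
  fin_cases i <;> fin_cases j <;> simp [η1eq, η2eq, Pp, Pm, peq, z1p, z2p, κ₂]
  all_goals norm_cast; field_simp; ring

lemma K2_η1eq_η2eq (hγ₀ : 0 < γ₀) (hγ₁ : 0 ≤ γ₁) (hγ₂ : 0 < γ₂) (hκ : 0 ≤ κ) (ω₂ : ℝ) :
    K2 γ₀ γ₁ γ₂ κ ω₂ (η1eq γ₀ γ₁ γ₂ κ) (η2eq γ₀ γ₁ γ₂ κ) = 0 := by
  rw [K2_eq]
  ext i j
  fin_cases i <;> fin_cases j <;> simp [η1eq, η2eq, Pp, Pm, peq, z1p, z2p, κ₂]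
  all_goals norm_cast; field_simp; ring

lemma re_neg_of_mem_roots_charpoly_populationMatrix (hγ₀ : 0 < γ₀) (hγ₁ : 0 ≤ γ₁)
    (hγ₂ : 0 < γ₂) (hκ : 0 ≤ κ) :
    ∀ z ∈ (populationMatrix γ₀ γ₁ γ₂ κ).charpoly.roots, z.re < 0 := by
  intro z hz
  have hroot := (mem_roots (charpoly_monic _).ne_zero).1 hz
  rw [IsRoot, eval_charpoly_populationMatrix] at hroot
  refine Complex.re_neg_of_cubic_eq_zero (by positivity) (by positivity) (by positivity) ?_ hroot
  rw [← sub_pos]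
  ring_nf
  positivity

end TwoLevelModel

section TwoLevelDynamics

variable {γ₀ γ₁ γ₂ κ ω₁ ω₂ : ℝ} {η₁ η₂ : ℝ → Matrix (Fin 2) (Fin 2) ℂ}

lemma trace_K1_add_trace_K2 (M N : Matrix (Fin 2) (Fin 2) ℂ) :
    (K1 γ₀ γ₁ γ₂ κ ω₁ M N).trace + (K2 γ₀ γ₁ γ₂ κ ω₂ M N).trace = 0 := by
  simp only [K1_eq, K2_eq, trace_fin_two, of_apply, cons_val', cons_val_zero, cons_val_one,
    empty_val', cons_val_fin_one]
  ring

lemma trace_add_trace_eq_of_hasDerivAt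
    (hd₁ : ∀ t, 0 ≤ t → HasDerivAt η₁ (K1 γ₀ γ₁ γ₂ κ ω₁ (η₁ t) (η₂ t)) t)
    (hd₂ : ∀ t, 0 ≤ t → HasDerivAt η₂ (K2 γ₀ γ₁ γ₂ κ ω₂ (η₁ t) (η₂ t)) t) {t : ℝ} (ht : 0 ≤ t) :
    (η₁ t).trace + (η₂ t).trace = (η₁ 0).trace + (η₂ 0).trace := by
  have hderiv : ∀ s ∈ Ici (0 : ℝ), HasDerivAt (fun s => (η₁ s).trace + (η₂ s).trace) 0 s := by
    intro s hs
    exact ((hd₁ s hs).matrix_trace.fun_add (hd₂ s hs).matrix_trace).congr_deriv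
      (trace_K1_add_trace_K2 _ _)
  exact constant_of_has_deriv_right_zero
    (fun s hs => (hderiv s hs.1).continuousAt.continuousWithinAt)
    (fun s hs => (hderiv s hs.1).hasDerivWithinAt) t ⟨ht, le_rfl⟩

lemma tendsto_populations_of_hasDerivAt (hγ₀ : 0 < γ₀) (hγ₁ : 0 ≤ γ₁) (hγ₂ : 0 < γ₂)
    (hκ : 0 ≤ κ)
    (hd₁ : ∀ t, 0 ≤ t → HasDerivAt η₁ (K1 γ₀ γ₁ γ₂ κ ω₁ (η₁ t) (η₂ t)) t)
    (hd₂ : ∀ t, 0 ≤ t → HasDerivAt η₂ (K2 γ₀ γ₁ γ₂ κ ω₂ (η₁ t) (η₂ t)) t)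
    (htr : (η₁ 0).trace + (η₂ 0).trace = 0) :
    Tendsto (fun t => ![η₁ t 0 0, η₁ t 1 1, η₂ t 0 0]) atTop (𝓝 0) := by
  refine Matrix.tendsto_zero_of_hasDerivAt_mulVec
    (re_neg_of_mem_roots_charpoly_populationMatrix hγ₀ hγ₁ hγ₂ hκ)
    (eventually_atTop.2 ⟨0, fun t ht => hasDerivAt_pi.2 fun i => ?_⟩)
  have htrace := trace_add_trace_eq_of_hasDerivAt hd₁ hd₂ ht
  rw [htr, trace_fin_two, trace_fin_two] at htrace
  fin_cases i
  · refine ((hd₁ t ht).matrix_apply 0 0).congr_deriv ?_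
    simp [K1_eq, populationMatrix, mulVec, dotProduct, Fin.sum_univ_three]
    linear_combination γ₂ * htrace
  · refine ((hd₁ t ht).matrix_apply 1 1).congr_deriv ?_
    simp [K1_eq, populationMatrix, mulVec, dotProduct, Fin.sum_univ_three]
    ring
  · refine ((hd₂ t ht).matrix_apply 0 0).congr_deriv ?_
    simp [K2_eq, populationMatrix, mulVec, dotProduct, Fin.sum_univ_three]
    ring

lemma tendsto_coherences_of_hasDerivAt (hγ₀ : 0 < γ₀) (hγ₁ : 0 ≤ γ₁) (hγ₂ : 0 ≤ γ₂)
    (hκ : 0 ≤ κ)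
    (hd₁ : ∀ t, 0 ≤ t → HasDerivAt η₁ (K1 γ₀ γ₁ γ₂ κ ω₁ (η₁ t) (η₂ t)) t)
    (hd₂ : ∀ t, 0 ≤ t → HasDerivAt η₂ (K2 γ₀ γ₁ γ₂ κ ω₂ (η₁ t) (η₂ t)) t) {i j : Fin 2}
    (hij : i ≠ j) :
    Tendsto (fun t => η₁ t i j) atTop (𝓝 0) ∧ Tendsto (fun t => η₂ t i j) atTop (𝓝 0) := by
  have hrate₁ : 0 < (γ₀ + γ₁) / 2 + γ₀ * κ := by positivity
  have hrate₂ : 0 < (γ₀ + γ₂) / 2 := by positivity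
  have hK₁ := fun t (ht : 0 ≤ t) => (hd₁ t ht).matrix_apply i j
  have hK₂ := fun t (ht : 0 ≤ t) => (hd₂ t ht).matrix_apply i j
  fin_cases i <;> fin_cases j <;> simp only [Fin.zero_eta, Fin.mk_one, Fin.isValue, ne_eq,
    not_true_eq_false, zero_ne_one, one_ne_zero, not_false_eq_true, K1_eq, K2_eq, neg_add_rev,
    of_apply, cons_val', cons_val_zero, cons_val_one, cons_val_fin_one] at hij hK₁ hK₂ <;>
    exact Complex.tendsto_zero_of_hasDerivAt_cascade (by simp; linarith) (by simp; linarith)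
      (eventually_atTop.2 ⟨0, hK₁⟩) (eventually_atTop.2 ⟨0, hK₂⟩)

theorem tendsto_zero_of_hasDerivAt_K1_K2 (hγ₀ : 0 < γ₀) (hγ₁ : 0 ≤ γ₁) (hγ₂ : 0 < γ₂)
    (hκ : 0 ≤ κ) (hd₁ : ∀ t, 0 ≤ t → HasDerivAt η₁ (K1 γ₀ γ₁ γ₂ κ ω₁ (η₁ t) (η₂ t)) t)
    (hd₂ : ∀ t, 0 ≤ t → HasDerivAt η₂ (K2 γ₀ γ₁ γ₂ κ ω₂ (η₁ t) (η₂ t)) t)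
    (htr : (η₁ 0).trace + (η₂ 0).trace = 0) :
    Tendsto η₁ atTop (𝓝 0) ∧ Tendsto η₂ atTop (𝓝 0) := by
  have hpop := tendsto_pi_nhds.1 (tendsto_populations_of_hasDerivAt hγ₀ hγ₁ hγ₂ hκ hd₁ hd₂ htr)
  have h₁₀₀ : Tendsto (fun t => η₁ t 0 0) atTop (𝓝 0) := by simpa using hpop 0
  have h₁₁₁ : Tendsto (fun t => η₁ t 1 1) atTop (𝓝 0) := by simpa using hpop 1
  have h₂₀₀ : Tendsto (fun t => η₂ t 0 0) atTop (𝓝 0) := by simpa using hpop 2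
  have h₂₁₁ : Tendsto (fun t => η₂ t 1 1) atTop (𝓝 0) := by
    have hsum := ((h₁₀₀.add h₁₁₁).add h₂₀₀).neg
    rw [add_zero, add_zero, neg_zero] at hsum
    refine hsum.congr' ?_
    filter_upwards [eventually_ge_atTop 0] with t ht
    have htrace := trace_add_trace_eq_of_hasDerivAt hd₁ hd₂ ht
    rw [htr, trace_fin_two, trace_fin_two] at htrace
    linear_combination -htrace
  obtain ⟨h₁₀₁, h₂₀₁⟩ :=
    tendsto_coherences_of_hasDerivAt hγ₀ hγ₁ hγ₂.le hκ hd₁ hd₂ (i := 0) (j := 1) (by decide)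
  obtain ⟨h₁₁₀, h₂₁₀⟩ :=
    tendsto_coherences_of_hasDerivAt hγ₀ hγ₁ hγ₂.le hκ hd₁ hd₂ (i := 1) (j := 0) (by decide)
  exact ⟨Matrix.tendsto_of_fin_two h₁₀₀ h₁₀₁ h₁₁₀ h₁₁₁,
    Matrix.tendsto_of_fin_two h₂₀₀ h₂₀₁ h₂₁₀ h₂₁₁⟩

end TwoLevelDynamics

theorem two_level_equilibrium_global_attractor_general (γ₀ γ₁ γ₂ κ ω₁ ω₂ : ℝ)
    (hγ₀ : 0 < γ₀) (hγ₁ : 0 < γ₁) (hγ₂ : 0 < γ₂) (hκ : 0 < κ)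
    (η₁ η₂ : ℝ → Matrix (Fin 2) (Fin 2) ℂ)
    (hd₁ : ∀ t : ℝ, 0 ≤ t → HasDerivAt η₁ (K1 γ₀ γ₁ γ₂ κ ω₁ (η₁ t) (η₂ t)) t)
    (hd₂ : ∀ t : ℝ, 0 ≤ t → HasDerivAt η₂ (K2 γ₀ γ₁ γ₂ κ ω₂ (η₁ t) (η₂ t)) t)
    (htr : (η₁ 0).trace + (η₂ 0).trace = 1) :
    Filter.Tendsto η₁ Filter.atTop (nhds (η1eq γ₀ γ₁ γ₂ κ)) ∧
    Filter.Tendsto η₂ Filter.atTop (nhds (η2eq γ₀ γ₁ γ₂ κ)) := by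
  set E₁ := η1eq γ₀ γ₁ γ₂ κ
  set E₂ := η2eq γ₀ γ₁ γ₂ κ
  have hD₁ : ∀ t, 0 ≤ t →
      HasDerivAt (fun s => η₁ s - E₁) (K1 γ₀ γ₁ γ₂ κ ω₁ (η₁ t - E₁) (η₂ t - E₂)) t := by
    intro t ht
    rw [K1_sub, K1_η1eq_η2eq hγ₀ hγ₁.le hγ₂ hκ.le, sub_zero]
    exact (hd₁ t ht).sub_const E₁
  have hD₂ : ∀ t, 0 ≤ t →
      HasDerivAt (fun s => η₂ s - E₂) (K2 γ₀ γ₁ γ₂ κ ω₂ (η₁ t - E₁) (η₂ t - E₂)) t := by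
    intro t ht
    rw [K2_sub, K2_η1eq_η2eq hγ₀ hγ₁.le hγ₂ hκ.le, sub_zero]
    exact (hd₂ t ht).sub_const E₂
  have htrD : (η₁ 0 - E₁).trace + (η₂ 0 - E₂).trace = 0 := by
    rw [trace_sub, trace_sub, sub_add_sub_comm, htr, trace_η1eq_add_trace_η2eq, sub_self]
  obtain ⟨h₁, h₂⟩ := tendsto_zero_of_hasDerivAt_K1_K2 hγ₀ hγ₁.le hγ₂ hκ.le hD₁ hD₂ htrD
  exact ⟨tendsto_sub_nhds_zero_iff.1 h₁, tendsto_sub_nhds_zero_iff.1 h₂⟩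

/-- The equilibrium of the two-level model is a global attractor: along any solution of the
Lindblad rate equation with positive semidefinite initial data of total trace `1`, one has
`η₁(t) → p(z₁⁺P₊ + z₁⁻P₋)` and `η₂(t) → (1−p)(z₂⁺P₊ + z₂⁻P₋)` as `t → ∞`. -/
theorem two_level_equilibrium_global_attractor (γ₀ γ₁ γ₂ κ ω₁ ω₂ : ℝ)
    (hγ₀ : 0 < γ₀) (hγ₁ : 0 < γ₁) (hγ₂ : 0 < γ₂) (hκ : 0 < κ)
    (η₁ η₂ : ℝ → Matrix (Fin 2) (Fin 2) ℂ)
    (hd₁ : ∀ t : ℝ, 0 ≤ t → HasDerivAt η₁ (K1 γ₀ γ₁ γ₂ κ ω₁ (η₁ t) (η₂ t)) t)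
    (hd₂ : ∀ t : ℝ, 0 ≤ t → HasDerivAt η₂ (K2 γ₀ γ₁ γ₂ κ ω₂ (η₁ t) (η₂ t)) t)
    (hpos₁ : (η₁ 0).PosSemidef) (hpos₂ : (η₂ 0).PosSemidef)
    (htr : (η₁ 0).trace + (η₂ 0).trace = 1) :
    Filter.Tendsto η₁ Filter.atTop (nhds (η1eq γ₀ γ₁ γ₂ κ)) ∧
    Filter.Tendsto η₂ Filter.atTop (nhds (η2eq γ₀ γ₁ γ₂ κ)) :=
  two_level_equilibrium_global_attractor_general γ₀ γ₁ γ₂ κ ω₁ ω₂ hγ₀ hγ₁ hγ₂ hκ η₁ η₂ hd₁ hd₂ htr
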